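/- arXiv:1802.07382 — 15 statements merged into one kernel-verified Lean document; each statement's English description precedes it below -/
import Mathlib

section
/- Let (Θ, μ) be a probability space, let ε ∈ (0,1), and let L, L̃ : Θ → ℝ be measurable functions with L(θ) ≤ 0 and L̃(θ) ≤ 0 for all θ, satisfying |L(θ) − L̃(θ)| ≤ ε·|L(θ)| for every θ ∈ Θ. Define the marginal likelihoods E = ∫ exp(L(θ)) dμ(θ) and Ẽ = ∫ exp(L̃(θ)) dμ(θ), and assume E > 0. Then |ln E − ln Ẽ| ≤ ε·|ln E|. -/
open MeasureTheory

theorem bayesian_coreset_marginal_likelihood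
    {Θ : Type*} [MeasurableSpace Θ] (μ : Measure Θ) [IsProbabilityMeasure μ]
    (ε : ℝ) (hε : ε ∈ Set.Ioo (0 : ℝ) 1)
    (L L' : Θ → ℝ) (hL : Measurable L) (hL' : Measurable L')
    (hLnonpos : ∀ θ, L θ ≤ 0) (hL'nonpos : ∀ θ, L' θ ≤ 0)
    (happrox : ∀ θ, |L θ - L' θ| ≤ ε * |L θ|)
    (hEpos : 0 < ∫ θ, Real.exp (L θ) ∂μ) :
    |Real.log (∫ θ, Real.exp (L θ) ∂μ) - Real.log (∫ θ, Real.exp (L' θ) ∂μ)| ≤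
      ε * |Real.log (∫ θ, Real.exp (L θ) ∂μ)| := by
  obtain ⟨hε0, hε1⟩ := hε
  set E := ∫ θ, Real.exp (L θ) ∂μ with hE
  set E' := ∫ θ, Real.exp (L' θ) ∂μ with hE'
  -- integrability of bounded measurable functions
  have hint : ∀ (f : Θ → ℝ), Measurable f → (∀ θ, f θ ≤ 0) →
      Integrable (fun θ => Real.exp (f θ)) μ := by
    intro f hf hfnp
    refine (integrable_const (1 : ℝ)).mono' (hf.exp.aestronglyMeasurable) ?_
    filter_upwards with θ
    rw [Real.norm_eq_abs, abs_of_pos (Real.exp_pos _)]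
    exact Real.exp_le_one_iff.2 (hfnp θ)
  have hintL := hint L hL hLnonpos
  have hintL' := hint L' hL' hL'nonpos
  have hintp : ∀ (p : ℝ), 0 ≤ p → Integrable (fun θ => Real.exp (L θ) ^ p) μ := by
    intro p hp
    refine (integrable_const (1 : ℝ)).mono'
      ((Real.continuous_rpow_const hp).measurable.comp hL.exp).aestronglyMeasurable ?_
    filter_upwards with θ
    rw [Real.norm_eq_abs, abs_of_nonneg (Real.rpow_nonneg (Real.exp_pos _).le _)]
    exact Real.rpow_le_one (Real.exp_pos _).le (Real.exp_le_one_iff.2 (hLnonpos θ)) hp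
  -- pointwise bounds
  have hpt : ∀ θ, Real.exp (L θ) ^ (1 + ε) ≤ Real.exp (L' θ) ∧
      Real.exp (L' θ) ≤ Real.exp (L θ) ^ (1 - ε) := by
    intro θ
    have habs : |L θ| = -(L θ) := abs_of_nonpos (hLnonpos θ)
    have h := abs_le.1 (happrox θ)
    rw [habs] at h
    constructor
    · rw [Real.rpow_def_of_pos (Real.exp_pos _), Real.log_exp, Real.exp_le_exp]
      nlinarith [h.2]
    · rw [Real.rpow_def_of_pos (Real.exp_pos _), Real.log_exp, Real.exp_le_exp]
      nlinarith [h.1]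
  have hmem : ∀ᵐ θ ∂μ, Real.exp (L θ) ∈ Set.Ici (0 : ℝ) := by
    filter_upwards with θ; exact (Real.exp_pos _).le
  -- Jensen: E^(1+ε) ≤ ∫ exp(L)^(1+ε) and ∫ exp(L)^(1-ε) ≤ E^(1-ε)
  have hconv : E ^ (1 + ε) ≤ ∫ θ, Real.exp (L θ) ^ (1 + ε) ∂μ :=
    (convexOn_rpow (by linarith)).map_integral_le
      ((Real.continuous_rpow_const (by linarith)).continuousOn) isClosed_Ici hmem hintL
      (hintp _ (by linarith))
  have hconc : (∫ θ, Real.exp (L θ) ^ (1 - ε) ∂μ) ≤ E ^ (1 - ε) :=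
    (Real.concaveOn_rpow (by linarith) (by linarith)).le_map_integral
      ((Real.continuous_rpow_const (by linarith)).continuousOn) isClosed_Ici hmem hintL
      (hintp _ (by linarith))
  -- bounds on E'
  have hlow : E ^ (1 + ε) ≤ E' :=
    hconv.trans (integral_mono (hintp _ (by linarith)) hintL' fun θ => (hpt θ).1)
  have hhigh : E' ≤ E ^ (1 - ε) :=
    (integral_mono hintL' (hintp _ (by linarith)) fun θ => (hpt θ).2).trans hconc
  have hE'pos : 0 < E' := lt_of_lt_of_le (Real.rpow_pos_of_pos hEpos _) hlow
  have hlog1 : (1 + ε) * Real.log E ≤ Real.log E' := by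
    rw [← Real.log_rpow hEpos]; exact Real.log_le_log (Real.rpow_pos_of_pos hEpos _) hlow
  have hlog2 : Real.log E' ≤ (1 - ε) * Real.log E := by
    rw [← Real.log_rpow hEpos]; exact Real.log_le_log hE'pos hhigh
  have hElog : Real.log E ≤ 0 := by
    apply Real.log_nonpos hEpos.le
    calc E ≤ ∫ _, (1 : ℝ) ∂μ := integral_mono hintL (integrable_const 1)
            fun θ => Real.exp_le_one_iff.2 (hLnonpos θ)
      _ = 1 := by simp
  rw [abs_of_nonpos hElog, abs_le]
  constructor <;> nlinarith
end

section
/- Let Θ be a nonempty set, ε ≥ 0, and let L, L̂ : Θ → ℝ satisfy |L(θ) − L̂(θ)| ≤ ε·|L(θ)| for every θ ∈ Θ. Suppose θ₀, θ̂₀ ∈ Θ are maximizers, i.e., L(θ) ≤ L(θ₀) and L̂(θ) ≤ L̂(θ̂₀) for all θ ∈ Θ. Then for every θ ∈ Θ with L̂(θ) < L̂(θ̂₀), the log-likelihood-ratio quotient satisfies |(L(θ) − L(θ₀))/(L̂(θ) − L̂(θ̂₀)) − 1| ≤ ε·(|L(θ)| + |L(θ₀)| + |L(θ̂₀)|)/(L̂(θ̂₀)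 − L̂(θ)). -/
theorem log_likelihood_ratio_test_approx
    {Θ : Type*} [Nonempty Θ] (ε : ℝ) (hε : 0 ≤ ε)
    (L Lhat : Θ → ℝ) (happrox : ∀ θ, |L θ - Lhat θ| ≤ ε * |L θ|)
    (θ₀ θhat₀ : Θ) (hmax : ∀ θ, L θ ≤ L θ₀) (hmaxhat : ∀ θ, Lhat θ ≤ Lhat θhat₀) :
    ∀ θ : Θ, Lhat θ < Lhat θhat₀ →
      |(L θ - L θ₀) / (Lhat θ - Lhat θhat₀) - 1| ≤
        ε * (|L θ| + |L θ₀| + |L θhat₀|) / (Lhat θhat₀ - Lhat θ) := by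
  intro θ hθ
  have hD : 0 < Lhat θhat₀ - Lhat θ := by linarith
  have hne : Lhat θ - Lhat θhat₀ ≠ 0 := by linarith
  -- bound on |L θ₀ - Lhat θhat₀|
  have h1 := abs_le.mp (happrox θ₀)
  have h2 := abs_le.mp (happrox θhat₀)
  have hmid : |L θ₀ - Lhat θhat₀| ≤ ε * (|L θ₀| + |L θhat₀|) := by
    have ha : L θ₀ - Lhat θhat₀ ≤ ε * |L θ₀| := by
      have := hmaxhat θ₀; linarith [h1.2]
    have hb : -(ε * |L θhat₀|) ≤ L θ₀ - Lhat θhat₀ := by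
      have := hmax θhat₀; linarith [h2.1]
    rw [abs_le]
    constructor
    · nlinarith [abs_nonneg (L θ₀), abs_nonneg (L θhat₀)]
    · nlinarith [abs_nonneg (L θ₀), abs_nonneg (L θhat₀)]
  have hnum : |(L θ - Lhat θ) - (L θ₀ - Lhat θhat₀)| ≤
      ε * (|L θ| + |L θ₀| + |L θhat₀|) := by
    calc |(L θ - Lhat θ) - (L θ₀ - Lhat θhat₀)|
        ≤ |L θ - Lhat θ| + |L θ₀ - Lhat θhat₀| := abs_sub _ _
      _ ≤ ε * |L θ| + ε * (|L θ₀| + |L θhat₀|) := add_le_add (happrox θ) hmid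
      _ = ε * (|L θ| + |L θ₀| + |L θhat₀|) := by ring
  have heq : (L θ - L θ₀) / (Lhat θ - Lhat θhat₀) - 1 =
      ((L θ - Lhat θ) - (L θ₀ - Lhat θhat₀)) / (Lhat θ - Lhat θhat₀) := by
    field_simp
    ring
  rw [heq, abs_div, abs_of_neg (by linarith : Lhat θ - Lhat θhat₀ < 0)]
  rw [div_le_div_iff₀ (by linarith) hD]
  have : -(Lhat θ - Lhat θhat₀) = Lhat θhat₀ - Lhat θ := by ring
  rw [this]
  exact mul_le_mul_of_nonneg_right hnum (le_of_lt hD)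
end

section
/- Let P be a nonempty finite set, w : P → (0,∞), X a set, c : P × X → [0,∞), and ε ∈ (0,1). Assume that every p ∈ P has sensitivity s(p) = 1, i.e., sup over x ∈ X with C(P,w,x) > 0 of w(p)c(p,x)/C(P,w,x) equals 1. Then for every nonempty proper subset Q ⊊ P and every u : Q → (0,∞), the weighted set (Q,u) is not an ε-coreset of (P,w,X,c). -/
/-!
Pick `p ∈ P \ Q`. Since the sensitivity of `p` is `1`, there are queries `x` at which `p` carries
all but an arbitrarily small fraction `δ` of the cost of `P`, so the rest of `P`, and with it `Q`,
costs at most `δ · C(P, w, x)` under the weights `w`. The weights `u` exceed `w` at most by a fixed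
factor `M` on `Q`, so `C(Q, u, x) ≤ M δ · C(P, w, x) < (1 - ε) · C(P, w, x)` for `δ` small, and the
coreset inequality fails at `x`.
-/

open Finset

namespace Coreset

variable {α X : Type*}

def cost (P : Finset α) (w : α → ℝ) (c : α → X → ℝ) (x : X) : ℝ :=
  ∑ p ∈ P, w p * c p x

variable {c : α → X → ℝ}

lemma cost_mono {Q P : Finset α} {w : α → ℝ} (hw : ∀ p ∈ P, 0 ≤ w p) (hc : ∀ p x, 0 ≤ c p x)
    (hQP : Q ⊆ P) (x : X) : cost Q w c x ≤ cost P w c x :=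
  sum_le_sum_of_subset_of_nonneg hQP fun p hp _ => mul_nonneg (hw p hp) (hc p x)

lemma cost_le_mul_cost {Q : Finset α} {u w : α → ℝ} {M : ℝ} (hc : ∀ p x, 0 ≤ c p x)
    (huw : ∀ q ∈ Q, u q ≤ M * w q) (x : X) : cost Q u c x ≤ M * cost Q w c x := by
  rw [cost, cost, mul_sum]
  exact sum_le_sum fun q hq => by
    simpa only [mul_assoc] using mul_le_mul_of_nonneg_right (huw q hq) (hc q x)

lemma cost_erase [DecidableEq α] {P : Finset α} {p : α} (hp : p ∈ P) (w : α → ℝ) (x : X) :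
    cost (P.erase p) w c x = cost P w c x - w p * c p x :=
  sum_erase_eq_sub hp

lemma exists_cost_erase_lt_of_sensitivity_eq_one [DecidableEq α] {P : Finset α} {w : α → ℝ}
    {p : α} (hp : p ∈ P)
    (hsens : sSup {r : ℝ | ∃ x : X, 0 < cost P w c x ∧ r = w p * c p x / cost P w c x} = 1)
    {δ : ℝ} (hδ : 0 < δ) :
    ∃ x, 0 < cost P w c x ∧ cost (P.erase p) w c x < δ * cost P w c x := by
  set S := {r : ℝ | ∃ x : X, 0 < cost P w c x ∧ r = w p * c p x / cost P w c x}
  have hS : S.Nonempty := by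
    by_contra hS
    rw [Set.not_nonempty_iff_eq_empty.mp hS, Real.sSup_empty] at hsens
    exact zero_ne_one hsens
  obtain ⟨_, ⟨x, hx, rfl⟩, hlt⟩ := exists_lt_of_lt_csSup hS (by linarith : 1 - δ < sSup S)
  rw [lt_div_iff₀ hx] at hlt
  exact ⟨x, hx, by rw [cost_erase hp]; linarith⟩

lemma exists_le_mul_of_pos (Q : Finset α) (u : α → ℝ) {w : α → ℝ} (hw : ∀ q ∈ Q, 0 < w q) :
    ∃ M, 0 ≤ M ∧ ∀ q ∈ Q, u q ≤ M * w q := by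
  refine ⟨∑ q ∈ Q, |u q| / w q, sum_nonneg fun q hq => div_nonneg (abs_nonneg _) (hw q hq).le,
    fun q hq => ?_⟩
  calc u q ≤ |u q| / w q * w q := by rw [div_mul_cancel₀ _ (hw q hq).ne']; exact le_abs_self _
    _ ≤ (∑ q ∈ Q, |u q| / w q) * w q := by
      gcongr
      · exact (hw q hq).le
      · exact single_le_sum (fun q hq => div_nonneg (abs_nonneg _) (hw q hq).le) hq

end Coreset

open Coreset in
theorem no_small_coreset_of_full_sensitivity_general
    {α X : Type*} (P : Finset α)
    (w : α → ℝ) (hw : ∀ p ∈ P, 0 < w p)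
    (c : α → X → ℝ) (hc : ∀ p x, 0 ≤ c p x)
    (ε : ℝ) (hε : ε ∈ Set.Ioo (0 : ℝ) 1)
    (hsens : ∀ p ∈ P,
      sSup {r : ℝ | ∃ x : X, 0 < (∑ q ∈ P, w q * c q x) ∧
        r = w p * c p x / ∑ q ∈ P, w q * c q x} = 1)
    (Q : Finset α) (hQ : Q ⊂ P)
    (u : α → ℝ) :
    ¬ (∀ x : X, |(∑ p ∈ P, w p * c p x) - ∑ q ∈ Q, u q * c q x| ≤
        ε * ∑ p ∈ P, w p * c p x) := by
  classical
  intro hcoreset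
  obtain ⟨p, hpP, hpQ⟩ := exists_of_ssubset hQ
  obtain ⟨M, hM, huw⟩ := exists_le_mul_of_pos Q u fun q hq => hw q (hQ.1 hq)
  have hδ : 0 < (1 - ε) / (M + 1) := div_pos (by linarith [hε.2]) (by linarith)
  obtain ⟨x, hx, hrest⟩ := exists_cost_erase_lt_of_sensitivity_eq_one hpP (hsens p hpP) hδ
  have hQu : cost Q u c x ≤ M * ((1 - ε) / (M + 1) * cost P w c x) :=
    calc cost Q u c x ≤ M * cost Q w c x := cost_le_mul_cost hc huw x
      _ ≤ M * cost (P.erase p) w c x := by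
        gcongr
        exact cost_mono (fun q hq => (hw q (mem_of_mem_erase hq)).le) hc
          (subset_erase.mpr ⟨hQ.1, hpQ⟩) x
      _ ≤ M * ((1 - ε) / (M + 1) * cost P w c x) := by gcongr
  have hsmall : M * ((1 - ε) / (M + 1)) < 1 - ε := by
    rw [mul_div_assoc', div_lt_iff₀ (by linarith)]
    nlinarith [hε.2]
  have := (le_abs_self _).trans (hcoreset x)
  change cost P w c x - cost Q u c x ≤ ε * cost P w c x at this
  nlinarith

theorem no_small_coreset_of_full_sensitivity
    {α X : Type*} (P : Finset α) (hP : P.Nonempty)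
    (w : α → ℝ) (hw : ∀ p ∈ P, 0 < w p)
    (c : α → X → ℝ) (hc : ∀ p x, 0 ≤ c p x)
    (ε : ℝ) (hε : ε ∈ Set.Ioo (0 : ℝ) 1)
    (hsens : ∀ p ∈ P,
      sSup {r : ℝ | ∃ x : X, 0 < (∑ q ∈ P, w q * c q x) ∧
        r = w p * c p x / ∑ q ∈ P, w q * c q x} = 1)
    (Q : Finset α) (hQne : Q.Nonempty) (hQ : Q ⊂ P)
    (u : α → ℝ) (hu : ∀ q ∈ Q, 0 < u q) :
    ¬ (∀ x : X, |(∑ p ∈ P, w p * c p x) - ∑ q ∈ Q, u q * c q x| ≤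
        ε * ∑ p ∈ P, w p * c p x) :=
  no_small_coreset_of_full_sensitivity_general P w hw c hc ε hε hsens Q hQ u
end

section
/- Let P ⊂ ℝᵈ be a nonempty finite set such that for every p ∈ P and every R > 0 there is y_p ∈ ℝᵈ with ‖y_p‖ ≤ R, y_p · p = −R, and y_p · q ≥ R for every q ∈ P \ {p}. Let w : P → (0,∞), and let f : ℝ → (0,∞) be non-decreasing with lim_{R→∞} f(−R)/f(R) = 0. Define c(p,x) = f(p·x) for p, x ∈ ℝᵈ. Then every p ∈ P has sensitivity s(p) = sup_{x ∈ ℝᵈ} w(p)f(p·x) / Σ_{q∈P} w(q)f(q·x) equal to 1. -/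
open scoped RealInnerProductSpace

theorem sensitivity_one_of_separable
    {d : ℕ} (P : Finset (EuclideanSpace ℝ (Fin d))) (hP : P.Nonempty)
    (hsep : ∀ p ∈ P, ∀ R : ℝ, 0 < R → ∃ y : EuclideanSpace ℝ (Fin d),
      ‖y‖ ≤ R ∧ ⟪y, p⟫ = -R ∧ ∀ q ∈ P, q ≠ p → R ≤ ⟪y, q⟫)
    (w : EuclideanSpace ℝ (Fin d) → ℝ) (hw : ∀ p ∈ P, 0 < w p)
    (f : ℝ → ℝ) (hfpos : ∀ z, 0 < f z) (hfmono : Monotone f)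
    (hlim : Filter.Tendsto (fun R : ℝ => f (-R) / f R) Filter.atTop (nhds 0)) :
    ∀ p ∈ P,
      sSup {r : ℝ | ∃ x : EuclideanSpace ℝ (Fin d),
        r = w p * f ⟪p, x⟫ / ∑ q ∈ P, w q * f ⟪q, x⟫} = 1 := by
  intro p hp
  classical
  have hwp := hw p hp
  have hden : ∀ x : EuclideanSpace ℝ (Fin d), 0 < ∑ q ∈ P, w q * f ⟪q, x⟫ :=
    fun x => Finset.sum_pos (fun q hq => mul_pos (hw q hq) (hfpos _)) hP
  have hub : ∀ r ∈ {r : ℝ | ∃ x : EuclideanSpace ℝ (Fin d),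
      r = w p * f ⟪p, x⟫ / ∑ q ∈ P, w q * f ⟪q, x⟫}, r ≤ 1 := by
    rintro r ⟨x, rfl⟩
    rw [div_le_one (hden x)]
    exact Finset.single_le_sum (f := fun q => w q * f ⟪q, x⟫)
      (fun q hq => le_of_lt (mul_pos (hw q hq) (hfpos _))) hp
  have hne : Set.Nonempty {r : ℝ | ∃ x : EuclideanSpace ℝ (Fin d),
      r = w p * f ⟪p, x⟫ / ∑ q ∈ P, w q * f ⟪q, x⟫} := ⟨_, 0, rfl⟩
  apply le_antisymm (csSup_le hne hub)
  apply le_of_forall_pos_le_add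
  intro ε hε
  set W := ∑ q ∈ P.erase p, w q with hWdef
  have hW0 : 0 ≤ W := Finset.sum_nonneg fun q hq => (hw q (Finset.mem_of_mem_erase hq)).le
  have hδ : 0 < ε * w p / (W + 1) := by positivity
  have hev : ∀ᶠ R in Filter.atTop, f (-R) / f R < ε * w p / (W + 1) :=
    hlim.eventually (gt_mem_nhds hδ)
  obtain ⟨R, hRδ, hRpos⟩ := (hev.and (Filter.eventually_gt_atTop 0)).exists
  obtain ⟨y, hynorm, hyp, hyq⟩ := hsep p hp R hRpos
  set x : EuclideanSpace ℝ (Fin d) := -y with hxdef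
  have hpx : ⟪p, x⟫ = R := by
    rw [hxdef, inner_neg_right, real_inner_comm, hyp]; ring
  have hfR : 0 < f R := hfpos R
  -- the other terms are small
  have hsmall : ∑ q ∈ P.erase p, w q * f ⟪q, x⟫ ≤ W * f (-R) := by
    rw [hWdef, Finset.sum_mul]
    apply Finset.sum_le_sum
    intro q hq
    have hqP := Finset.mem_of_mem_erase hq
    have hqne := Finset.ne_of_mem_erase hq
    have : ⟪q, x⟫ ≤ -R := by
      have := hyq q hqP hqne
      rw [hxdef, inner_neg_right, real_inner_comm]
      linarith
    exact mul_le_mul_of_nonneg_left (hfmono this) (hw q hqP).le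
  have hsplit : ∑ q ∈ P, w q * f ⟪q, x⟫
      = w p * f ⟪p, x⟫ + ∑ q ∈ P.erase p, w q * f ⟪q, x⟫ :=
    (Finset.add_sum_erase P (fun q => w q * f ⟪q, x⟫) hp).symm
  set A := w p * f R with hAdef
  have hA : 0 < A := mul_pos hwp hfR
  have hB : W * f (-R) < ε * A := by
    have h1 : f (-R) < ε * w p / (W + 1) * f R :=
      (div_lt_iff₀ hfR).mp hRδ
    have h2 : W * f (-R) ≤ W * (ε * w p / (W + 1) * f R) :=
      mul_le_mul_of_nonneg_left h1.le hW0
    have h3 : W * (ε * w p / (W + 1) * f R) < ε * A := by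
      rw [hAdef]
      have hW1 : (0:ℝ) < W + 1 := by linarith
      rw [div_mul_eq_mul_div, mul_div_assoc', div_lt_iff₀ hW1]
      nlinarith [mul_pos (mul_pos hε hwp) hfR]
    linarith
  have hrS : (w p * f ⟪p, x⟫ / ∑ q ∈ P, w q * f ⟪q, x⟫) ∈
      {r : ℝ | ∃ x : EuclideanSpace ℝ (Fin d),
        r = w p * f ⟪p, x⟫ / ∑ q ∈ P, w q * f ⟪q, x⟫} := ⟨x, rfl⟩
  have hr1 : 1 - ε ≤ w p * f ⟪p, x⟫ / ∑ q ∈ P, w q * f ⟪q, x⟫ := by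
    rw [le_div_iff₀ (hden x), hsplit, hpx]
    have hB0 : 0 ≤ ∑ q ∈ P.erase p, w q * f ⟪q, x⟫ :=
      Finset.sum_nonneg fun q hq =>
        (mul_pos (hw q (Finset.mem_of_mem_erase hq)) (hfpos _)).le
    nlinarith [hsmall, hB, hA, hB0]
  have := le_csSup ⟨1, hub⟩ hrS
  linarith
end

section
/- Let f : ℝ → (0,∞) be a non-decreasing function satisfying lim_{x→∞} f(−x)/f(x) = 0, let ε ∈ (0,1), let n ≥ 1 be an integer, and let w : ℝⁿ → (0,∞). Define c(p,x) = f(p·x). Then there is a set P ⊂ ℝⁿ of exactly n points such that every ε-coreset (Q,u) of (P, w, ℝⁿ, c), with Q ⊆ P and u : Q → (0,∞), satisfies Q = P. -/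
/-!
Take `P` to be the standard basis `e₁, …, eₙ`. If a coreset omits `eᵢ`, query at the point
`x` with `xᵢ = M` and all other coordinates `-M`: every point of the coreset then costs `f (-M)`,
while `P` costs at least `w eᵢ * f M`. Since `f (-M) / f M → 0`, for large `M` the coreset
cost falls below `(1 - ε)` times the cost of `P`.
-/

open scoped RealInnerProductSpace
open Filter Finset Topology

lemma exists_mul_lt_mul_of_tendsto_div_atTop {f : ℝ → ℝ} (hfpos : ∀ z, 0 < f z)
    (hlim : Tendsto (fun x : ℝ => f (-x) / f x) atTop (𝓝 0)) (K : ℝ) {c : ℝ} (hc : 0 < c) :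
    ∃ M, K * f (-M) < c * f M := by
  have hK : Tendsto (fun x : ℝ => K * (f (-x) / f x)) atTop (𝓝 0) := by
    simpa using hlim.const_mul K
  obtain ⟨M, hM⟩ := (hK.eventually (gt_mem_nhds hc)).exists
  refine ⟨M, ?_⟩
  rwa [← mul_div_assoc, div_lt_iff₀ (hfpos M)] at hM

noncomputable def spikeQuery {n : ℕ} (i : Fin n) (M : ℝ) : EuclideanSpace ℝ (Fin n) :=
  WithLp.toLp 2 fun j => if j = i then M else -M

lemma card_image_basisFun (n : ℕ) :
    (univ.image (EuclideanSpace.basisFun (Fin n) ℝ)).card = n := by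
  rw [card_image_of_injective _
    (EuclideanSpace.basisFun (Fin n) ℝ).orthonormal.linearIndependent.injective,
    card_univ, Fintype.card_fin]

lemma inner_basisFun_spikeQuery {n : ℕ} (i j : Fin n) (M : ℝ) :
    ⟪EuclideanSpace.basisFun (Fin n) ℝ j, spikeQuery i M⟫ = if j = i then M else -M := by
  rw [EuclideanSpace.basisFun_inner]
  rfl

lemma sum_mul_spikeQuery_of_notMem {n : ℕ} (f : ℝ → ℝ)
    (u : EuclideanSpace ℝ (Fin n) → ℝ) {Q : Finset (EuclideanSpace ℝ (Fin n))} {i : Fin n}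
    (M : ℝ)
    (hQ : Q ⊆ univ.image (EuclideanSpace.basisFun (Fin n) ℝ))
    (hi : EuclideanSpace.basisFun (Fin n) ℝ i ∉ Q) :
    ∑ q ∈ Q, u q * f ⟪q, spikeQuery i M⟫ = (∑ q ∈ Q, u q) * f (-M) := by
  rw [sum_mul]
  refine sum_congr rfl fun q hq => ?_
  obtain ⟨j, -, rfl⟩ := mem_image.mp (hQ hq)
  have hji : j ≠ i := by
    rintro rfl
    exact hi hq
  rw [inner_basisFun_spikeQuery, if_neg hji]

theorem lower_bound_no_small_coreset_general
    (f : ℝ → ℝ) (hfpos : ∀ z, 0 < f z)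
    (hlim : Filter.Tendsto (fun x : ℝ => f (-x) / f x) Filter.atTop (nhds 0))
    (ε : ℝ) (hε : ε ∈ Set.Ioo (0 : ℝ) 1) (n : ℕ)
    (w : EuclideanSpace ℝ (Fin n) → ℝ) (hw : ∀ p, 0 < w p) :
    ∃ P : Finset (EuclideanSpace ℝ (Fin n)), P.card = n ∧
      ∀ Q : Finset (EuclideanSpace ℝ (Fin n)), Q ⊆ P →
        ∀ u : EuclideanSpace ℝ (Fin n) → ℝ, (∀ q ∈ Q, 0 < u q) →
          (∀ x : EuclideanSpace ℝ (Fin n),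
            |(∑ p ∈ P, w p * f ⟪p, x⟫) - ∑ q ∈ Q, u q * f ⟪q, x⟫| ≤
              ε * ∑ p ∈ P, w p * f ⟪p, x⟫) →
      Q = P := by
  set b := EuclideanSpace.basisFun (Fin n) ℝ
  refine ⟨univ.image b, card_image_basisFun n, ?_⟩
  intro Q hQ u _ hcore
  refine hQ.antisymm fun p hp => ?_
  obtain ⟨i, -, rfl⟩ := mem_image.mp hp
  by_contra hi
  have h1ε : 0 < 1 - ε := sub_pos.mpr hε.2
  obtain ⟨M, hM⟩ := exists_mul_lt_mul_of_tendsto_div_atTop hfpos hlim (∑ q ∈ Q, u q)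
    (mul_pos h1ε (hw (b i)))
  set CP := ∑ p ∈ univ.image b, w p * f ⟪p, spikeQuery i M⟫
  have hCP : w (b i) * f M ≤ CP := by
    have := single_le_sum (f := fun p => w p * f ⟪p, spikeQuery i M⟫)
      (fun p _ => (mul_pos (hw p) (hfpos _)).le) hp
    rwa [inner_basisFun_spikeQuery, if_pos rfl] at this
  have hcoreM := (le_abs_self _).trans (hcore (spikeQuery i M))
  rw [sum_mul_spikeQuery_of_notMem f u M hQ hi] at hcoreM
  have hCP' := mul_le_mul_of_nonneg_left hCP h1ε.le
  linarith

theorem lower_bound_no_small_coreset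
    (f : ℝ → ℝ) (hfpos : ∀ z, 0 < f z) (hfmono : Monotone f)
    (hlim : Filter.Tendsto (fun x : ℝ => f (-x) / f x) Filter.atTop (nhds 0))
    (ε : ℝ) (hε : ε ∈ Set.Ioo (0 : ℝ) 1) (n : ℕ) (hn : 1 ≤ n)
    (w : EuclideanSpace ℝ (Fin n) → ℝ) (hw : ∀ p, 0 < w p) :
    ∃ P : Finset (EuclideanSpace ℝ (Fin n)), P.card = n ∧
      ∀ Q : Finset (EuclideanSpace ℝ (Fin n)), Q ⊆ P →
        ∀ u : EuclideanSpace ℝ (Fin n) → ℝ, (∀ q ∈ Q, 0 < u q) →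
          (∀ x : EuclideanSpace ℝ (Fin n),
            |(∑ p ∈ P, w p * f ⟪p, x⟫) - ∑ q ∈ Q, u q * f ⟪q, x⟫| ≤
              ε * ∑ p ∈ P, w p * f ⟪p, x⟫) →
      Q = P :=
  lower_bound_no_small_coreset_general f hfpos hlim ε hε n w hw
end

section
/- Let P ⊂ ℝᵈ be a nonempty finite set, M > 0, f : ℝ → (0,M] a non-decreasing function, g : [0,∞) → [0,∞), and k > 0. For every x ∈ ℝᵈ and p′ ∈ P define c_k(p′,x) = f(p′·x) + g(‖x‖)/k. Let p ∈ P and b_p > 0 be such that for every z > 0: f(‖p‖z) + g(z)/k ≤ b_p·(f(−‖p‖z) + g(z)/k). Then for every x ∈ ℝᵈ: max_{p′∈P} c_k(p′,x) ≤ (M/f(0))·(b_p + 1)·c_k(p,x). -/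
open scoped RealInnerProductSpace

theorem max_cost_le_of_ratio_bound
    {d : ℕ} (P : Finset (EuclideanSpace ℝ (Fin d))) (hP : P.Nonempty)
    (M : ℝ) (hM : 0 < M)
    (f : ℝ → ℝ) (hfpos : ∀ z, 0 < f z) (hfleM : ∀ z, f z ≤ M) (hfmono : Monotone f)
    (g : ℝ → ℝ) (hg : ∀ z, 0 ≤ z → 0 ≤ g z) (k : ℝ) (hk : 0 < k)
    (p : EuclideanSpace ℝ (Fin d)) (hp : p ∈ P) (bp : ℝ) (hbp : 0 < bp)
    (hratio : ∀ z : ℝ, 0 < z →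
      f (‖p‖ * z) + g z / k ≤ bp * (f (-(‖p‖ * z)) + g z / k)) :
    ∀ x : EuclideanSpace ℝ (Fin d), ∀ p' ∈ P,
      f ⟪p', x⟫ + g ‖x‖ / k ≤ M / f 0 * (bp + 1) * (f ⟪p, x⟫ + g ‖x‖ / k) := by
  intro x p' _
  set G : ℝ := g ‖x‖ / k with hGdef
  have hG : 0 ≤ G := div_nonneg (hg _ (norm_nonneg x)) hk.le
  have hf0 : 0 < f 0 := hfpos 0
  set A : ℝ := f ⟪p, x⟫ with hA
  have hApos : 0 < A := hfpos _
  have key : f 0 + G ≤ (bp + 1) * (A + G) := by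
    rcases eq_or_ne x 0 with hx | hx
    · have hx0 : ⟪p, x⟫ = 0 := by simp [hx]
      rw [hA, hx0]
      nlinarith [hfpos (0:ℝ)]
    · have hz : 0 < ‖x‖ := norm_pos_iff.mpr hx
      have hcs : -(‖p‖ * ‖x‖) ≤ ⟪p, x⟫ := by
        have := abs_real_inner_le_norm p x
        have := neg_abs_le ⟪p, x⟫
        nlinarith [abs_real_inner_le_norm p x]
      have h1 : f (-(‖p‖ * ‖x‖)) ≤ A := hfmono hcs
      have h2 := hratio ‖x‖ hz
      have h3 : f 0 ≤ f (‖p‖ * ‖x‖) :=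
        hfmono (by positivity)
      nlinarith
  have hr1 : 1 ≤ M / f 0 := (one_le_div hf0).mpr (hfleM 0)
  have hrM : M / f 0 * f 0 = M := div_mul_cancel₀ M hf0.ne'
  have hLHS : f ⟪p', x⟫ + G ≤ M + G := by linarith [hfleM ⟪p', x⟫]
  have hstep : M / f 0 * (f 0 + G) ≤ M / f 0 * ((bp + 1) * (A + G)) :=
    mul_le_mul_of_nonneg_left key (by positivity)
  calc f ⟪p', x⟫ + G ≤ M + G := hLHS
    _ ≤ M / f 0 * (f 0 + G) := by nlinarith
    _ ≤ M / f 0 * ((bp + 1) * (A + G)) := hstep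
    _ = M / f 0 * (bp + 1) * (A + G) := by ring
end

section
/- Let f : ℝ → (0,1] be a continuous, non-decreasing function with f(0) > 0, and let x₁ > 0 be the unique positive real with f(−x₁) = x₁². Then for every x ≥ 0: (f(x) + x²)/(f(−x) + x²) ≤ max{2, 2/x₁²}. -/
theorem ratio_bound_simple
    (f : ℝ → ℝ) (hf : Continuous f) (hmono : Monotone f)
    (hpos : ∀ z, 0 < f z) (hle : ∀ z, f z ≤ 1) (hf0 : 0 < f 0)
    (x₁ : ℝ) (hx₁ : 0 < x₁) (heq : f (-x₁) = x₁ ^ 2) :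
    ∀ x : ℝ, 0 ≤ x →
      (f x + x ^ 2) / (f (-x) + x ^ 2) ≤ max 2 (2 / x₁ ^ 2) := by
  intro x hx
  have hx1sq : (0:ℝ) < x₁ ^ 2 := by positivity
  have hx1le : x₁ ^ 2 ≤ 1 := heq ▸ hle (-x₁)
  have hden : 0 < f (-x) + x ^ 2 := by
    have := hpos (-x); nlinarith
  have key : (f x + x ^ 2) / (f (-x) + x ^ 2) ≤ 2 / x₁ ^ 2 := by
    rw [div_le_div_iff₀ hden hx1sq]
    have hfx : f x ≤ 1 := hle x
    rcases le_total x x₁ with h | h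
    · have hmon : x₁ ^ 2 ≤ f (-x) := heq ▸ hmono (by linarith : -x₁ ≤ -x)
      nlinarith [sq_nonneg x, sq_nonneg x₁]
    · have hxx : x₁ ^ 2 ≤ x ^ 2 := by nlinarith
      have := hpos (-x)
      nlinarith
  exact key.trans (le_max_right _ _)
end

section
/- Let f : ℝ → (0,1] be a continuous, non-decreasing function with f(0) > 0 and f(−z) ≤ 1/2 for every z ≥ 0, and let x₁ > 0 be the unique positive real with f(−x₁) = x₁². Let c > 0 and let D > 1 satisfy f(c·y) ≤ D·f(y/√k) for every y ≥ 0 and every k > 0. Then there exists k₀ > 0 such that for every k ≥ k₀ and every x ≥ 0: (f(cx) + x²/k)/(f(−cx) + x²/k) ≤ 3·D·max{2, 2/x₁²}·c²·k. -/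
set_option maxHeartbeats 800000


theorem regularized_ratio_bound
    (f : ℝ → ℝ) (hf : Continuous f) (hmono : Monotone f)
    (hpos : ∀ z, 0 < f z) (hle : ∀ z, f z ≤ 1) (hf0 : 0 < f 0)
    (hhalf : ∀ z : ℝ, 0 ≤ z → f (-z) ≤ 1 / 2)
    (x₁ : ℝ) (hx₁ : 0 < x₁) (heq : f (-x₁) = x₁ ^ 2)
    (c : ℝ) (hc : 0 < c) (D : ℝ) (hD : 1 < D)
    (hDf : ∀ y : ℝ, 0 ≤ y → ∀ k : ℝ, 0 < k → f (c * y) ≤ D * f (y / Real.sqrt k)) :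
    ∃ k₀ : ℝ, 0 < k₀ ∧ ∀ k : ℝ, k₀ ≤ k → ∀ x : ℝ, 0 ≤ x →
      (f (c * x) + x ^ 2 / k) / (f (-(c * x)) + x ^ 2 / k) ≤
        3 * D * max 2 (2 / x₁ ^ 2) * c ^ 2 * k := by
  have hc2 : (0:ℝ) < c ^ 2 := by positivity
  have hx₁2 : (0:ℝ) < x₁ ^ 2 := by positivity
  refine ⟨max (x₁ ^ 2 / c ^ 2) (1 / (3 * c ^ 2)), lt_max_of_lt_right (by positivity), ?_⟩
  intro k hk x hx
  have hk1 : x₁ ^ 2 / c ^ 2 ≤ k := le_trans (le_max_left _ _) hk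
  have hk2 : 1 / (3 * c ^ 2) ≤ k := le_trans (le_max_right _ _) hk
  have hkpos : 0 < k := lt_of_lt_of_le (by positivity) hk2
  have hk2' : 1 ≤ 3 * c ^ 2 * k := by
    rw [div_le_iff₀ (by positivity)] at hk2; linarith
  have hk1' : x₁ ^ 2 ≤ c ^ 2 * k := by
    rw [div_le_iff₀ hc2] at hk1; linarith
  set M : ℝ := max 2 (2 / x₁ ^ 2) with hM
  have hM2 : (2:ℝ) ≤ M := le_max_left _ _
  have hMx : 2 / x₁ ^ 2 ≤ M := le_max_right _ _
  have hMx' : 2 ≤ M * x₁ ^ 2 := by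
    rw [div_le_iff₀ hx₁2] at hMx; linarith
  have hBpos : 0 < f (-(c * x)) + x ^ 2 / k := by
    have := hpos (-(c * x)); positivity
  have hx2k : 0 ≤ x ^ 2 / k := by positivity
  have hfle : f (c * x) ≤ 1 := hle _
  rw [div_le_iff₀ hBpos]
  rcases le_or_gt (c * x) x₁ with hcase | hcase
  · -- c*x ≤ x₁ : denominator ≥ x₁², numerator ≤ 2
    have hden : x₁ ^ 2 ≤ f (-(c * x)) := by
      rw [← heq]; exact hmono (by linarith)
    have hxk : x ^ 2 ≤ k := by
      nlinarith [mul_nonneg hc.le hx]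
    have hxb : x ^ 2 / k ≤ 1 := by
      rw [div_le_one hkpos]; exact hxk
    -- numerator ≤ 2 ≤ R * B
    have hMnn : (0:ℝ) ≤ M := by linarith
    have hMB : 2 ≤ M * (f (-(c * x)) + x ^ 2 / k) := by
      calc (2:ℝ) ≤ M * x₁ ^ 2 := hMx'
        _ ≤ M * (f (-(c * x)) + x ^ 2 / k) :=
          mul_le_mul_of_nonneg_left (by linarith) hMnn
    have h3 : (1:ℝ) ≤ 3 * D * c ^ 2 * k := by nlinarith
    have hRB : 2 ≤ 3 * D * M * c ^ 2 * k * (f (-(c * x)) + x ^ 2 / k) := by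
      calc (2:ℝ) = 1 * 2 := (one_mul 2).symm
        _ ≤ (3 * D * c ^ 2 * k) * (M * (f (-(c * x)) + x ^ 2 / k)) :=
          mul_le_mul h3 hMB (by norm_num) (by linarith)
        _ = 3 * D * M * c ^ 2 * k * (f (-(c * x)) + x ^ 2 / k) := by ring
    linarith
  · -- x₁ < c*x : denominator ≥ x²/k, x² > x₁²/c²
    have hxx : x₁ ^ 2 ≤ c ^ 2 * x ^ 2 := by
      nlinarith [mul_nonneg hc.le hx]
    have hB' : x ^ 2 / k ≤ f (-(c * x)) + x ^ 2 / k := by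
      have := hpos (-(c * x)); linarith
    have hxpos : 0 < x := by nlinarith
    have hSnn : (0:ℝ) ≤ c ^ 2 * x ^ 2 := by positivity
    have hMnn : (0:ℝ) ≤ M := by linarith
    have key : 1 + x ^ 2 / k ≤ 3 * D * M * c ^ 2 * k * (x ^ 2 / k) := by
      have h1 : 3 * D * M * c ^ 2 * k * (x ^ 2 / k) = 3 * D * M * (c ^ 2 * x ^ 2) := by
        field_simp
      rw [h1]
      have h1' : (1:ℝ) ≤ c ^ 2 * x ^ 2 / x₁ ^ 2 := by
        rw [le_div_iff₀ hx₁2]; linarith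
      have hq : x ^ 2 / k ≤ c ^ 2 * x ^ 2 / x₁ ^ 2 := by
        rw [div_le_div_iff₀ hkpos hx₁2]
        nlinarith [mul_le_mul_of_nonneg_left hk1' (sq_nonneg x)]
      calc 1 + x ^ 2 / k ≤ c ^ 2 * x ^ 2 / x₁ ^ 2 + c ^ 2 * x ^ 2 / x₁ ^ 2 :=
            add_le_add h1' hq
        _ = 2 / x₁ ^ 2 * (c ^ 2 * x ^ 2) := by ring
        _ ≤ M * (c ^ 2 * x ^ 2) := mul_le_mul_of_nonneg_right hMx hSnn
        _ ≤ 3 * D * (M * (c ^ 2 * x ^ 2)) := by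
            nlinarith [mul_nonneg hMnn hSnn]
        _ = 3 * D * M * (c ^ 2 * x ^ 2) := by ring
    have hR : 0 ≤ 3 * D * M * c ^ 2 * k := by nlinarith
    have := mul_le_mul_of_nonneg_left hB' hR
    linarith
end

section
/- Let f(z) = 1/(1+e^{−z}) be the sigmoid function and let c > 0. Then for every k ≥ 1/c² and every x ≥ 0: (f(cx) + x²/k)/(f(−cx) + x²/k) ≤ 66·c²·k. -/
theorem sigmoid_regularized_ratio_bound
    (c : ℝ) (hc : 0 < c) (k : ℝ) (hk : 1 / c ^ 2 ≤ k) (x : ℝ) (hx : 0 ≤ x) :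
    (1 / (1 + Real.exp (-(c * x))) + x ^ 2 / k) /
      (1 / (1 + Real.exp (c * x)) + x ^ 2 / k) ≤ 66 * c ^ 2 * k := by
  have hk0 : 0 < k := lt_of_lt_of_le (by positivity) hk
  have hc2k : 1 ≤ c ^ 2 * k := by
    rw [div_le_iff₀ (by positivity)] at hk; linarith
  set E := Real.exp (c * x) with hE
  have hE1 : 1 ≤ E := Real.one_le_exp (by positivity)
  have hEpos : 0 < E := lt_of_lt_of_le one_pos hE1
  have hEm : Real.exp (-(c * x)) = 1 / E := by rw [Real.exp_neg]; ring
  have hDpos : 0 < 1 / (1 + E) + x ^ 2 / k := by positivity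
  rw [div_le_iff₀ hDpos, hEm]
  have hiE : 0 < 1 / E := by positivity
  have hN : 1 / (1 + 1 / E) ≤ 1 := by
    rw [div_le_one (by positivity)]; linarith
  have hfpos : 0 < 1 / (1 + E) := by positivity
  have ht0 : 0 ≤ x ^ 2 / k := by positivity
  by_cases hcx : c * x ≤ 1
  · have hEle : E ≤ 3 := by
      calc E ≤ Real.exp 1 := Real.exp_le_exp.mpr hcx
        _ ≤ 3 := by linarith [Real.exp_one_lt_d9]
    have hD4 : (1 : ℝ) / 4 ≤ 1 / (1 + E) :=
      one_div_le_one_div_of_le (by linarith) (by linarith)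
    have hxle : x ≤ 1 / c := by rw [le_div_iff₀ hc]; linarith
    have hx2 : x ^ 2 / k ≤ 1 := by
      rw [div_le_one hk0]
      have h1 : x ^ 2 ≤ (1 / c) ^ 2 := pow_le_pow_left₀ hx hxle 2
      have h2 : (1 / c) ^ 2 = 1 / c ^ 2 := by rw [div_pow, one_pow]
      linarith [hk, h2 ▸ h1]
    nlinarith [hN, hx2, hc2k, hD4, ht0]
  · push_neg at hcx
    have h1 : 1 ≤ c ^ 2 * x ^ 2 := by nlinarith
    have hkx : x ^ 2 / k * k = x ^ 2 := div_mul_cancel₀ _ hk0.ne'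
    nlinarith [hN, hc2k, h1, hkx, ht0, hfpos,
      mul_nonneg ht0 (sub_nonneg.mpr hc2k),
      mul_nonneg (mul_nonneg (by norm_num : (0:ℝ) ≤ 66) (sq_nonneg c)) (mul_nonneg hk0.le hfpos.le)]
end

section
/- Let f(z) = (1/(1+e^{−z}))² be the squared sigmoid function and let c > 0. Then for every k ≥ 1/c² and every x ≥ 0: (f(cx) + x²/k)/(f(−cx) + x²/k) ≤ 168·c²·k. -/
theorem sigmoid_squared_regularized_ratio_bound
    (c : ℝ) (hc : 0 < c) (k : ℝ) (hk : 1 / c ^ 2 ≤ k) (x : ℝ) (hx : 0 ≤ x) :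
    ((1 / (1 + Real.exp (-(c * x)))) ^ 2 + x ^ 2 / k) /
      ((1 / (1 + Real.exp (c * x))) ^ 2 + x ^ 2 / k) ≤ 168 * c ^ 2 * k := by
  have hk0 : 0 < k := lt_of_lt_of_le (by positivity) hk
  have hc2k : 1 ≤ k * c ^ 2 := (div_le_iff₀ (by positivity)).mp hk
  have hEp : 0 < Real.exp (c * x) := Real.exp_pos _
  have hEn : 0 < Real.exp (-(c * x)) := Real.exp_pos _
  have hB : 0 < (1 / (1 + Real.exp (c * x))) ^ 2 := by positivity
  have hr : 0 ≤ x ^ 2 / k := by positivity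
  have hA : (1 / (1 + Real.exp (-(c * x)))) ^ 2 ≤ 1 := by
    rw [div_pow, one_pow]
    rw [div_le_one (by positivity)]
    nlinarith
  rw [div_le_iff₀ (by positivity)]
  rcases le_or_gt (c * x) 1 with hle | hgt
  · have hr1 : x ^ 2 / k ≤ 1 := by
      rw [div_le_one hk0]
      have h1 : (c * x) ^ 2 ≤ 1 := by nlinarith [mul_nonneg hc.le hx]
      nlinarith [h1, mul_pos hc hc]
    have hE : Real.exp (c * x) < 2.7182818286 :=
      lt_of_le_of_lt (Real.exp_le_exp.mpr hle) Real.exp_one_lt_d9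
    have hB14 : 1 / 14 ≤ (1 / (1 + Real.exp (c * x))) ^ 2 := by
      rw [div_pow, one_pow, div_le_div_iff₀ (by norm_num) (by positivity)]
      nlinarith
    nlinarith [mul_le_mul hc2k hB14 (by norm_num) (le_of_lt (by nlinarith : (0:ℝ) < k * c ^ 2)),
      mul_nonneg (mul_nonneg hk0.le (sq_nonneg c)) hr]
  · have hkr : k * (x ^ 2 / k) = x ^ 2 := mul_div_cancel₀ _ (ne_of_gt hk0)
    have hx2 : 1 ≤ c ^ 2 * x ^ 2 := by nlinarith
    have hdiv : x ^ 2 / k ≤ c ^ 2 * x ^ 2 := by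
      rw [div_le_iff₀ hk0]; nlinarith
    nlinarith [mul_nonneg (mul_nonneg hk0.le (sq_nonneg c)) hB.le]
end

section
/- Let f(z) = ln(1+e^{z}) be the logistic loss function, and let c > 0 and R > 0. Then there exists k₀ > 0 such that for every k ≥ k₀ and every x with 0 ≤ x ≤ R: (f(cx) + x²/k)/(f(−cx) + x²/k) ≤ 3·(ln(2e^{cR})/ln 2)·√k·c. -/
theorem logistic_regularized_ratio_bound
    (c R : ℝ) (hc : 0 < c) (hR : 0 < R) :
    ∃ k₀ : ℝ, 0 < k₀ ∧ ∀ k : ℝ, k₀ ≤ k → ∀ x : ℝ, 0 ≤ x → x ≤ R →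
      (Real.log (1 + Real.exp (c * x)) + x ^ 2 / k) /
        (Real.log (1 + Real.exp (-(c * x))) + x ^ 2 / k) ≤
      3 * (Real.log (2 * Real.exp (c * R)) / Real.log 2) * Real.sqrt k * c := by
  set D : ℝ := Real.log (1 + Real.exp (-(c * R))) with hD
  have hDpos : 0 < D := Real.log_pos (by linarith [Real.exp_pos (-(c * R))])
  set N : ℝ := Real.log 2 + c * R + R ^ 2 with hN
  have hNpos : 0 < N := by positivity
  refine ⟨max 1 ((N / (D * c)) ^ 2), lt_of_lt_of_le one_pos (le_max_left _ _), ?_⟩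
  intro k hk x hx0 hxR
  have hk1 : (1 : ℝ) ≤ k := le_trans (le_max_left _ _) hk
  have hk0 : (0 : ℝ) < k := lt_of_lt_of_le one_pos hk1
  -- log(2 * exp(cR)) = log 2 + cR
  have hlog2 : Real.log (2 * Real.exp (c * R)) = Real.log 2 + c * R := by
    rw [Real.log_mul two_ne_zero (Real.exp_ne_zero _), Real.log_exp]
  -- denominator lower bound
  have hden : D ≤ Real.log (1 + Real.exp (-(c * x))) + x ^ 2 / k := by
    have h1 : Real.exp (-(c * R)) ≤ Real.exp (-(c * x)) := by
      apply Real.exp_le_exp.mpr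
      nlinarith
    have h2 : D ≤ Real.log (1 + Real.exp (-(c * x))) :=
      Real.log_le_log (by positivity) (by linarith)
    have h3 : 0 ≤ x ^ 2 / k := by positivity
    linarith
  -- numerator upper bound
  have hnum : Real.log (1 + Real.exp (c * x)) + x ^ 2 / k ≤ N := by
    have h1 : Real.exp (c * x) ≤ Real.exp (c * R) := by
      apply Real.exp_le_exp.mpr; nlinarith
    have h2 : (1 : ℝ) ≤ Real.exp (c * R) := by
      rw [show (1:ℝ) = Real.exp 0 by simp]
      apply Real.exp_le_exp.mpr; positivity
    have h3 : Real.log (1 + Real.exp (c * x)) ≤ Real.log 2 + c * R := by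
      calc Real.log (1 + Real.exp (c * x)) ≤ Real.log (2 * Real.exp (c * R)) :=
            Real.log_le_log (by positivity) (by nlinarith)
        _ = Real.log 2 + c * R := hlog2
    have h4 : x ^ 2 / k ≤ R ^ 2 := by
      calc x ^ 2 / k ≤ x ^ 2 / 1 := by
            apply div_le_div_of_nonneg_left (by positivity) one_pos hk1
        _ = x ^ 2 := by ring
        _ ≤ R ^ 2 := by nlinarith
    linarith
  have hratio : (Real.log (1 + Real.exp (c * x)) + x ^ 2 / k) /
      (Real.log (1 + Real.exp (-(c * x))) + x ^ 2 / k) ≤ N / D :=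
    div_le_div₀ hNpos.le hnum hDpos hden
  -- √k lower bound
  have hsqrt : N / (D * c) ≤ Real.sqrt k := by
    have h1 : (N / (D * c)) ^ 2 ≤ k := le_trans (le_max_right _ _) hk
    calc N / (D * c) = Real.sqrt ((N / (D * c)) ^ 2) := by
          rw [Real.sqrt_sq (by positivity)]
      _ ≤ Real.sqrt k := Real.sqrt_le_sqrt h1
  have hND : N / D ≤ Real.sqrt k * c := by
    have := mul_le_mul_of_nonneg_right hsqrt hc.le
    calc N / D = N / (D * c) * c := by field_simp
      _ ≤ Real.sqrt k * c := this
  -- M ≥ 1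
  have hM : (1 : ℝ) ≤ Real.log (2 * Real.exp (c * R)) / Real.log 2 := by
    rw [hlog2]
    rw [le_div_iff₀ (Real.log_pos one_lt_two)]
    nlinarith [Real.log_pos (show (1:ℝ) < 2 by norm_num), mul_pos hc hR]
  have hsk : 0 ≤ Real.sqrt k * c := by positivity
  calc (Real.log (1 + Real.exp (c * x)) + x ^ 2 / k) /
        (Real.log (1 + Real.exp (-(c * x))) + x ^ 2 / k) ≤ N / D := hratio
    _ ≤ Real.sqrt k * c := hND
    _ = 1 * (Real.sqrt k * c) := (one_mul _).symm
    _ ≤ 3 * (Real.log (2 * Real.exp (c * R)) / Real.log 2) * (Real.sqrt k * c) := by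
        apply mul_le_mul_of_nonneg_right _ hsk
        nlinarith
    _ = 3 * (Real.log (2 * Real.exp (c * R)) / Real.log 2) * Real.sqrt k * c := by ring
end

section
/- Let f(z) = 1/(1+e^{−z}) be the sigmoid, let P = {p₁, …, pₙ} ⊂ ℝᵈ, let k > 0, and define the cost c(p,x) = 1/(1+e^{−p·x}) + ‖x‖²/k for p, x ∈ ℝᵈ. Suppose b₁ ≤ b₂ ≤ … ≤ bₙ are positive reals such that for every i ∈ {1,…,n} and every z > 0: f(‖p_i‖z) + z²/k ≤ b_i·(f(−‖p_i‖z) + z²/k). Then for every j ∈ {1,…,n}, the sensitivity of p_j with unit weights and queries x ∈ ℝᵈ satisfies s(p_j) = sup_{x∈ℝᵈ} c(p_j,x)/Σ_{i=1}^{n} c(p_i,x) ≤ 2(b_j + 1)/j. -/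
open scoped RealInnerProductSpace

theorem sigmoid_sensitivity_bound
    {d n : ℕ} (p : Fin n → EuclideanSpace ℝ (Fin d)) (k : ℝ) (hk : 0 < k)
    (b : Fin n → ℝ) (hbpos : ∀ i, 0 < b i) (hbmono : Monotone b)
    (hb : ∀ i : Fin n, ∀ z : ℝ, 0 < z →
      1 / (1 + Real.exp (-(‖p i‖ * z))) + z ^ 2 / k ≤
        b i * (1 / (1 + Real.exp (‖p i‖ * z)) + z ^ 2 / k)) :
    ∀ j : Fin n, ∀ x : EuclideanSpace ℝ (Fin d),
      (1 / (1 + Real.exp (-⟪p j, x⟫)) + ‖x‖ ^ 2 / k) /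
        (∑ i : Fin n, (1 / (1 + Real.exp (-⟪p i, x⟫)) + ‖x‖ ^ 2 / k)) ≤
      2 * (b j + 1) / ((j : ℕ) + 1) := by
  intro j x
  have hne : Nonempty (Fin n) := ⟨j⟩
  have hterm_pos : ∀ i : Fin n,
      0 < 1 / (1 + Real.exp (-⟪p i, x⟫)) + ‖x‖ ^ 2 / k := by
    intro i; positivity
  have hden_pos : 0 < ∑ i : Fin n, (1 / (1 + Real.exp (-⟪p i, x⟫)) + ‖x‖ ^ 2 / k) :=
    Finset.sum_pos (fun i _ => hterm_pos i) Finset.univ_nonempty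
  have hjpos : (0:ℝ) < (j : ℕ) + 1 := by positivity
  have hbj := hbpos j
  rcases eq_or_ne x 0 with hx | hx
  · subst hx
    simp only [inner_zero_right, neg_zero, Real.exp_zero, norm_zero]
    have h0 : ((0:ℝ))^2/k = 0 := by simp
    rw [h0, Finset.sum_const, Finset.card_univ, Fintype.card_fin, nsmul_eq_mul]
    have hn : (0:ℝ) < n := by exact_mod_cast j.pos
    have hjn : ((j:ℕ):ℝ) + 1 ≤ (n:ℝ) := by
      exact_mod_cast Nat.succ_le_of_lt j.isLt
    have hc : (0:ℝ) < 1/(1+1) + 0 := by norm_num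
    rw [div_le_div_iff₀ (mul_pos hn hc) hjpos]
    nlinarith [mul_pos hn hc, hbj]
  · have hz : 0 < ‖x‖ := norm_pos_iff.mpr hx
    set A : ℝ := 1/2 + ‖x‖^2/k with hA
    have hApos : 0 < A := by positivity
    have key : ∀ i : Fin n, A / b i ≤ 1/(1+Real.exp (-⟪p i, x⟫)) + ‖x‖^2/k := by
      intro i
      have h1 := hb i ‖x‖ hz
      have hexple : Real.exp (-(‖p i‖*‖x‖)) ≤ 1 := by
        rw [Real.exp_le_one_iff]
        have : (0:ℝ) ≤ ‖p i‖*‖x‖ := by positivity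
        linarith
      have h2 : A ≤ 1/(1+Real.exp (-(‖p i‖*‖x‖))) + ‖x‖^2/k := by
        have hp : (0:ℝ) < 1+Real.exp (-(‖p i‖*‖x‖)) := by positivity
        have : 1/(1+1:ℝ) ≤ 1/(1+Real.exp (-(‖p i‖*‖x‖))) :=
          one_div_le_one_div_of_le hp (by linarith)
        rw [hA]; norm_num at this ⊢; linarith
      have hinner : -⟪p i, x⟫ ≤ ‖p i‖*‖x‖ := by
        have h := abs_real_inner_le_norm (p i) x
        have := neg_abs_le ⟪p i, x⟫
        linarith
      have h3 : 1/(1+Real.exp (‖p i‖*‖x‖)) ≤ 1/(1+Real.exp (-⟪p i, x⟫)) := by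
        have hp : (0:ℝ) < 1+Real.exp (-⟪p i, x⟫) := by positivity
        exact one_div_le_one_div_of_le hp (by linarith [Real.exp_le_exp.mpr hinner])
      rw [div_le_iff₀ (hbpos i)]
      calc A ≤ 1/(1+Real.exp (-(‖p i‖*‖x‖))) + ‖x‖^2/k := h2
        _ ≤ b i * (1/(1+Real.exp (‖p i‖*‖x‖)) + ‖x‖^2/k) := h1
        _ ≤ b i * (1/(1+Real.exp (-⟪p i, x⟫)) + ‖x‖^2/k) := by
            have := (hbpos i).le; nlinarith
        _ = (1/(1+Real.exp (-⟪p i, x⟫)) + ‖x‖^2/k) * b i := by ring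
    have hsum : (((j:ℕ):ℝ)+1) * (A / b j) ≤
        ∑ i : Fin n, (1/(1+Real.exp (-⟪p i, x⟫)) + ‖x‖^2/k) := by
      have hsub : ∑ i ∈ Finset.Iic j, (1/(1+Real.exp (-⟪p i, x⟫)) + ‖x‖^2/k) ≤
          ∑ i : Fin n, (1/(1+Real.exp (-⟪p i, x⟫)) + ‖x‖^2/k) :=
        Finset.sum_le_sum_of_subset_of_nonneg (Finset.subset_univ _)
          (fun i _ _ => (hterm_pos i).le)
      have h2 : ∀ i ∈ Finset.Iic j,
          A / b j ≤ 1/(1+Real.exp (-⟪p i, x⟫)) + ‖x‖^2/k := by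
        intro i hi
        refine le_trans ?_ (key i)
        have hle : b i ≤ b j := hbmono (Finset.mem_Iic.mp hi)
        rw [div_le_div_iff₀ hbj (hbpos i)]
        nlinarith [hApos]
      calc (((j:ℕ):ℝ)+1) * (A / b j)
          = ∑ _i ∈ Finset.Iic j, (A / b j) := by
            rw [Finset.sum_const, Fin.card_Iic, nsmul_eq_mul]
            push_cast; ring
        _ ≤ ∑ i ∈ Finset.Iic j, (1/(1+Real.exp (-⟪p i, x⟫)) + ‖x‖^2/k) :=
            Finset.sum_le_sum h2
        _ ≤ _ := hsub
    have hnum : 1/(1+Real.exp (-⟪p j, x⟫)) + ‖x‖^2/k ≤ 2*A := by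
      have h1 : 1/(1+Real.exp (-⟪p j, x⟫)) ≤ 1 := by
        rw [div_le_one (by positivity)]
        linarith [Real.exp_pos (-⟪p j, x⟫)]
      have h2 : (0:ℝ) ≤ ‖x‖^2/k := by positivity
      rw [hA]; linarith
    rw [div_le_iff₀ hden_pos]
    have hRnn : (0:ℝ) ≤ 2 * (b j + 1) / ((j:ℕ) + 1) := by positivity
    calc 1/(1+Real.exp (-⟪p j, x⟫)) + ‖x‖^2/k ≤ 2*A := hnum
      _ ≤ 2 * (b j + 1) / ((j:ℕ) + 1) * ((((j:ℕ):ℝ)+1) * (A / b j)) := by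
          have hEq : 2 * (b j + 1) / (((j:ℕ):ℝ) + 1) * ((((j:ℕ):ℝ)+1) * (A / b j))
              = 2 * (b j + 1) * A / b j := by
            field_simp
          rw [hEq, le_div_iff₀ hbj]
          nlinarith [hApos]
      _ ≤ 2 * (b j + 1) / ((j:ℕ) + 1) *
            (∑ i : Fin n, (1/(1+Real.exp (-⟪p i, x⟫)) + ‖x‖^2/k)) := by
          exact mul_le_mul_of_nonneg_left hsum hRnn
end

section
/- Let P = {p₁, …, pₙ} ⊂ ℝᵈ with 0 < ‖p₁‖ ≤ ‖p₂‖ ≤ … ≤ ‖pₙ‖ ≤ 1, let k ≥ 1/‖p₁‖², and define c(p,x) = 1/(1+e^{−p·x}) + ‖x‖²/k. Then for every j ∈ {1,…,n}, the sensitivity of p_j satisfies s(p_j) = sup_{x∈ℝᵈ} c(p_j,x)/Σ_{i=1}^{n} c(p_i,x) ≤ 2(66·‖p_j‖²·k + 1)/j. -/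
open scoped RealInnerProductSpace

theorem sigmoid_sensitivity_explicit_bound
    {d n : ℕ} (hn : 0 < n) (p : Fin n → EuclideanSpace ℝ (Fin d))
    (hppos : ∀ i, 0 < ‖p i‖) (hpmono : Monotone fun i => ‖p i‖)
    (hple : ∀ i, ‖p i‖ ≤ 1)
    (k : ℝ) (hk : 1 / ‖p ⟨0, hn⟩‖ ^ 2 ≤ k) :
    ∀ j : Fin n, ∀ x : EuclideanSpace ℝ (Fin d),
      (1 / (1 + Real.exp (-⟪p j, x⟫)) + ‖x‖ ^ 2 / k) /
        (∑ i : Fin n, (1 / (1 + Real.exp (-⟪p i, x⟫)) + ‖x‖ ^ 2 / k)) ≤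
      2 * (66 * ‖p j‖ ^ 2 * k + 1) / ((j : ℕ) + 1) := by
  intro j x
  set f : Fin n → ℝ := fun i => 1 / (1 + Real.exp (-⟪p i, x⟫)) + ‖x‖ ^ 2 / k with hf
  have hp0 : 0 < ‖p ⟨0, hn⟩‖ := hppos _
  have hk0 : 0 < k := lt_of_lt_of_le (by positivity) hk
  have hA : 1 ≤ ‖p j‖ ^ 2 * k := by
    rw [div_le_iff₀ (by positivity)] at hk
    have hm : ‖p ⟨0, hn⟩‖ ≤ ‖p j‖ :=
      hpmono (show (⟨0, hn⟩ : Fin n) ≤ j from Fin.mk_le_mk.mpr (Nat.zero_le _))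
    have hsq : ‖p ⟨0, hn⟩‖ ^ 2 ≤ ‖p j‖ ^ 2 := by nlinarith
    nlinarith [mul_le_mul_of_nonneg_left hsq hk0.le]
  have hσpos : ∀ i : Fin n, 0 < 1 / (1 + Real.exp (-⟪p i, x⟫)) := by
    intro i; positivity
  have hσle : ∀ i : Fin n, 1 / (1 + Real.exp (-⟪p i, x⟫)) ≤ 1 := by
    intro i
    rw [div_le_one (by positivity)]
    nlinarith [Real.exp_pos (-⟪p i, x⟫)]
  have hq : 0 ≤ ‖x‖ ^ 2 / k := by positivity
  have hfpos : ∀ i : Fin n, 0 < f i := fun i => by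
    have := hσpos i; simp only [hf]; positivity
  have hD : 0 < ∑ i : Fin n, f i :=
    Finset.sum_pos (fun i _ => hfpos i) ⟨j, Finset.mem_univ j⟩
  have hjpos : (0:ℝ) < (j:ℕ) + 1 := by positivity
  have hsum : ∀ m : ℝ, (∀ i ≤ j, m ≤ f i) → ((j:ℕ) + 1) * m ≤ ∑ i : Fin n, f i := by
    intro m hm
    have h1 : ∑ i ∈ Finset.Iic j, f i ≤ ∑ i : Fin n, f i :=
      Finset.sum_le_sum_of_subset_of_nonneg (Finset.subset_univ _)
        (fun i _ _ => (hfpos i).le)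
    have h2 : ∑ i ∈ Finset.Iic j, m ≤ ∑ i ∈ Finset.Iic j, f i :=
      Finset.sum_le_sum (fun i hi => hm i (Finset.mem_Iic.mp hi))
    have h3 : ∑ i ∈ Finset.Iic j, m = ((j:ℕ) + 1) * m := by
      rw [Finset.sum_const, Fin.card_Iic, nsmul_eq_mul]
      push_cast
      ring
    linarith
  have hCpos : (134:ℝ) ≤ 2 * (66 * ‖p j‖ ^ 2 * k + 1) := by nlinarith
  rw [div_le_div_iff₀ hD hjpos]
  by_cases hcase : ‖p j‖ * ‖x‖ ≤ 1
  · -- small x case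
    have hnum : f j ≤ 2 := by
      have hx2 : ‖x‖ ^ 2 / k ≤ 1 := by
        rw [div_le_one hk0]
        have h1 : ‖p j‖ ^ 2 * ‖x‖ ^ 2 ≤ 1 := by
          nlinarith [mul_nonneg (hppos j).le (norm_nonneg x)]
        have h2 : ‖p j‖ ^ 2 * ‖x‖ ^ 2 ≤ ‖p j‖ ^ 2 * k := by linarith
        exact le_of_mul_le_mul_left h2 (pow_pos (hppos j) 2)
      have := hσle j
      simp only [hf]; linarith
    have hnum' : 1 / (1 + Real.exp (-⟪p j, x⟫)) + ‖x‖ ^ 2 / k ≤ 2 := hnum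
    have hlow : ((j:ℕ) + 1) * (1/4) ≤ ∑ i : Fin n, f i := by
      apply hsum
      intro i hi
      have hip : ‖p i‖ ≤ ‖p j‖ := hpmono hi
      have hIe : -⟪p i, x⟫ ≤ 1 := by
        have hcs := abs_real_inner_le_norm (p i) x
        have : ‖p i‖ * ‖x‖ ≤ ‖p j‖ * ‖x‖ :=
          mul_le_mul_of_nonneg_right hip (norm_nonneg x)
        cases abs_le.mp hcs with
        | intro h1 h2 => linarith
      have hexp : Real.exp (-⟪p i, x⟫) ≤ 3 := by
        calc Real.exp (-⟪p i, x⟫) ≤ Real.exp 1 := Real.exp_le_exp.mpr hIe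
          _ ≤ 3 := by linarith [Real.exp_one_lt_d9.le]
      have h4 : (1:ℝ)/4 ≤ 1 / (1 + Real.exp (-⟪p i, x⟫)) := by
        apply div_le_div_of_nonneg_left one_pos.le (by positivity)
        linarith
      simp only [hf]; linarith
    nlinarith [mul_le_mul_of_nonneg_right hnum' hjpos.le,
      mul_le_mul_of_nonneg_left hlow (by linarith : (0:ℝ) ≤ 2 * (66 * ‖p j‖ ^ 2 * k + 1)),
      mul_le_mul_of_nonneg_right hCpos (by positivity : (0:ℝ) ≤ ((j:ℕ) + 1) * (1/4))]
  · -- large x case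
    push_neg at hcase
    have hm0 : 0 < ‖x‖ ^ 2 / k := by
      have hx0 : 0 < ‖x‖ := by
        by_contra h
        push_neg at h
        have hx : ‖x‖ = 0 := le_antisymm h (norm_nonneg x)
        rw [hx, mul_zero] at hcase
        linarith
      positivity
    have hnum : f j ≤ (‖p j‖ ^ 2 * k + 1) * (‖x‖ ^ 2 / k) := by
      have hAm : 1 ≤ ‖p j‖ ^ 2 * k * (‖x‖ ^ 2 / k) := by
        have heq : ‖p j‖ ^ 2 * k * (‖x‖ ^ 2 / k) = ‖p j‖ ^ 2 * ‖x‖ ^ 2 := by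
          field_simp
        rw [heq]
        nlinarith [hppos j, norm_nonneg x]
      have := hσle j
      simp only [hf]
      nlinarith
    have hnum' : 1 / (1 + Real.exp (-⟪p j, x⟫)) + ‖x‖ ^ 2 / k ≤
        (‖p j‖ ^ 2 * k + 1) * (‖x‖ ^ 2 / k) := hnum
    have hlow : ((j:ℕ) + 1) * (‖x‖ ^ 2 / k) ≤ ∑ i : Fin n, f i := by
      apply hsum
      intro i _
      have := hσpos i
      simp only [hf]; linarith
    have hAC : ‖p j‖ ^ 2 * k + 1 ≤ 2 * (66 * ‖p j‖ ^ 2 * k + 1) := by nlinarith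
    have hC0 : (0:ℝ) ≤ 2 * (66 * ‖p j‖ ^ 2 * k + 1) := by linarith
    calc (1 / (1 + Real.exp (-⟪p j, x⟫)) + ‖x‖ ^ 2 / k) * ((j:ℕ) + 1)
        ≤ (‖p j‖ ^ 2 * k + 1) * (‖x‖ ^ 2 / k) * ((j:ℕ) + 1) :=
          mul_le_mul_of_nonneg_right hnum' hjpos.le
      _ = (‖p j‖ ^ 2 * k + 1) * (‖x‖ ^ 2 / k * (((j:ℕ) + 1))) := by ring
      _ ≤ 2 * (66 * ‖p j‖ ^ 2 * k + 1) * (‖x‖ ^ 2 / k * (((j:ℕ) + 1))) :=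
          mul_le_mul_of_nonneg_right hAC (mul_nonneg hm0.le hjpos.le)
      _ = 2 * (66 * ‖p j‖ ^ 2 * k + 1) * (((j:ℕ) + 1) * (‖x‖ ^ 2 / k)) := by ring
      _ ≤ 2 * (66 * ‖p j‖ ^ 2 * k + 1) * ∑ i : Fin n, f i :=
          mul_le_mul_of_nonneg_left hlow hC0
end

section
/- Let P = {p₁, …, pₙ} ⊂ ℝᵈ with 0 < ‖p₁‖ ≤ ‖p₂‖ ≤ … ≤ ‖pₙ‖ ≤ 1, let k ≥ 1/‖p₁‖², and define c(p,x) = 1/(1+e^{−p·x}) + ‖x‖²/k. Then the total sensitivity satisfies Σ_{j=1}^{n} s(p_j) ≤ 2(66k + 1)(1 + ln n), where s(p_j) = sup_{x∈ℝᵈ} c(p_j,x)/Σ_{i=1}^{n} c(p_i,x). -/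
open scoped RealInnerProductSpace

theorem sigmoid_total_sensitivity_bound
    {d n : ℕ} (hn : 0 < n) (p : Fin n → EuclideanSpace ℝ (Fin d))
    (hppos : ∀ i, 0 < ‖p i‖) (hpmono : Monotone fun i => ‖p i‖)
    (hple : ∀ i, ‖p i‖ ≤ 1)
    (k : ℝ) (hk : 1 / ‖p ⟨0, hn⟩‖ ^ 2 ≤ k) :
    ∑ j : Fin n, sSup (Set.range fun x : EuclideanSpace ℝ (Fin d) =>
        (1 / (1 + Real.exp (-⟪p j, x⟫)) + ‖x‖ ^ 2 / k) /
          ∑ i : Fin n, (1 / (1 + Real.exp (-⟪p i, x⟫)) + ‖x‖ ^ 2 / k)) ≤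
      2 * (66 * k + 1) * (1 + Real.log n) := by
  have hp0 := hppos ⟨0, hn⟩
  have hp0le := hple ⟨0, hn⟩
  have hk1 : 1 ≤ k := by
    refine le_trans ?_ hk
    rw [le_div_iff₀ (by positivity)]
    nlinarith
  have hkpos : (0:ℝ) < k := lt_of_lt_of_le one_pos hk1
  have hnpos : (0:ℝ) < n := by exact_mod_cast hn
  have key : ∀ j : Fin n, sSup (Set.range fun x : EuclideanSpace ℝ (Fin d) =>
        (1 / (1 + Real.exp (-⟪p j, x⟫)) + ‖x‖ ^ 2 / k) /
          ∑ i : Fin n, (1 / (1 + Real.exp (-⟪p i, x⟫)) + ‖x‖ ^ 2 / k)) ≤ (132*k+2)/n := by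
    intro j
    apply Real.sSup_le
    · rintro y ⟨x, rfl⟩
      simp only
      set r : ℝ := ‖x‖ with hr
      have hr0 : 0 ≤ r := norm_nonneg x
      have hu0 : 0 ≤ r^2/k := by positivity
      -- lower bound for each term
      have hL : ∀ i : Fin n, 1/(1+Real.exp r) + r^2/k
          ≤ 1 / (1 + Real.exp (-⟪p i, x⟫)) + r ^ 2 / k := by
        intro i
        have hinner : -⟪p i, x⟫ ≤ r := by
          have h1 := abs_real_inner_le_norm (p i) x
          have h2 : ‖p i‖ * ‖x‖ ≤ 1 * r := by
            apply mul_le_mul_of_nonneg_right (hple i) hr0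
          have := neg_le_of_abs_le h1
          nlinarith
        have h3 : 1/(1+Real.exp r) ≤ 1/(1+Real.exp (-⟪p i, x⟫)) := by
          apply one_div_le_one_div_of_le (by positivity)
          have := Real.exp_le_exp.mpr hinner
          linarith
        linarith
      have hsum : (n : ℝ) * (1/(1+Real.exp r) + r^2/k)
          ≤ ∑ i : Fin n, (1 / (1 + Real.exp (-⟪p i, x⟫)) + ‖x‖ ^ 2 / k) := by
        calc (n : ℝ) * (1/(1+Real.exp r) + r^2/k)
            = ∑ _i : Fin n, (1/(1+Real.exp r) + r^2/k) := by
              rw [Finset.sum_const, Finset.card_univ, Fintype.card_fin, nsmul_eq_mul]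
          _ ≤ _ := Finset.sum_le_sum fun i _ => hL i
      have hsumpos : 0 < ∑ i : Fin n, (1 / (1 + Real.exp (-⟪p i, x⟫)) + ‖x‖ ^ 2 / k) := by
        refine lt_of_lt_of_le ?_ hsum
        have : 0 < 1/(1+Real.exp r) + r^2/k := by positivity
        positivity
      have hnum : 1 / (1 + Real.exp (-⟪p j, x⟫)) + ‖x‖ ^ 2 / k ≤ 1 + r^2/k := by
        gcongr
        rw [div_le_one (by positivity)]
        have := Real.exp_pos (-⟪p j, x⟫)
        linarith
      have hkey : 1 + r^2/k ≤ (132*k+2) * (1/(1+Real.exp r) + r^2/k) := by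
        set s : ℝ := 1/(1+Real.exp r) with hs
        have hs0 : 0 < s := by positivity
        rcases le_or_gt r 1 with h | h
        · have he1 : Real.exp r ≤ 3 := by
            have h1 := Real.exp_le_exp.mpr h
            have h2 := Real.exp_one_lt_d9
            linarith
          have hs4 : (1:ℝ)/4 ≤ s := by
            rw [hs]
            apply one_div_le_one_div_of_le (by positivity)
            linarith
          nlinarith [mul_nonneg (by linarith : (0:ℝ) ≤ 132*k+2-134) hu0,
            mul_le_mul_of_nonneg_right hs4 (by linarith : (0:ℝ) ≤ 132*k+2)]
        · have hku : 1 ≤ k * (r^2/k) := by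
            rw [mul_div_cancel₀ _ (ne_of_gt hkpos)]
            nlinarith
          nlinarith [mul_nonneg (by linarith : (0:ℝ) ≤ 132*k+2) hs0.le,
            mul_nonneg (by linarith : (0:ℝ) ≤ 131*k+1) hu0, hku]
      rw [div_le_div_iff₀ hsumpos hnpos]
      calc (1 / (1 + Real.exp (-⟪p j, x⟫)) + ‖x‖ ^ 2 / k) * n
          ≤ (1 + r^2/k) * n := by
            apply mul_le_mul_of_nonneg_right hnum hnpos.le
        _ ≤ ((132*k+2) * (1/(1+Real.exp r) + r^2/k)) * n := by
            apply mul_le_mul_of_nonneg_right hkey hnpos.le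
        _ = (132*k+2) * ((n:ℝ) * (1/(1+Real.exp r) + r^2/k)) := by ring
        _ ≤ (132*k+2) * ∑ i : Fin n, (1 / (1 + Real.exp (-⟪p i, x⟫)) + ‖x‖ ^ 2 / k) := by
            apply mul_le_mul_of_nonneg_left hsum (by linarith)
    · positivity
  have hlog : 0 ≤ Real.log n := Real.log_nonneg (by exact_mod_cast hn)
  calc ∑ j : Fin n, sSup (Set.range fun x : EuclideanSpace ℝ (Fin d) =>
        (1 / (1 + Real.exp (-⟪p j, x⟫)) + ‖x‖ ^ 2 / k) /
          ∑ i : Fin n, (1 / (1 + Real.exp (-⟪p i, x⟫)) + ‖x‖ ^ 2 / k))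
      ≤ ∑ _j : Fin n, (132*k+2)/n := Finset.sum_le_sum fun j _ => key j
    _ = (132*k+2) := by
        rw [Finset.sum_const, Finset.card_univ, Fintype.card_fin, nsmul_eq_mul]
        field_simp
    _ = 2*(66*k+1) * 1 := by ring
    _ ≤ 2 * (66 * k + 1) * (1 + Real.log n) := by
        apply mul_le_mul_of_nonneg_left (by linarith) (by linarith)
end

section
/- Let f(z) = ln(1+e^{z}), let P = {p₁, …, pₙ} ⊂ ℝᵈ with ‖p_i‖ ≤ 1 for all i, let R, k > 0, and define c(p,x) = ln(1+e^{p·x}) + ‖x‖²/k for p ∈ P and x in the closed ball B(0,R) = {x ∈ ℝᵈ : ‖x‖ ≤ R}. Suppose b₁ ≤ b₂ ≤ … ≤ bₙ are positive reals such that for every i ∈ {1,…,n} and every z with 0 < z ≤ R: f(‖p_i‖z) + z²/k ≤ b_i·(f(−‖p_i‖z) + z²/k). Then for every j ∈ {1,…,n}, the sensitivity of p_j over queries in B(0,R) satisfies s(p_j) = sup_{‖x‖≤R} c(p_j,x)/Σ_{i=1}^{n} c(p_i,x) ≤ (ln(1+e^{R})/ln 2)·(b_j + 1)/j. -/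
open scoped RealInnerProductSpace

theorem logistic_sensitivity_bound
    {d n : ℕ} (p : Fin n → EuclideanSpace ℝ (Fin d)) (hple : ∀ i, ‖p i‖ ≤ 1)
    (R k : ℝ) (hR : 0 < R) (hk : 0 < k)
    (b : Fin n → ℝ) (hbpos : ∀ i, 0 < b i) (hbmono : Monotone b)
    (hb : ∀ i : Fin n, ∀ z : ℝ, 0 < z → z ≤ R →
      Real.log (1 + Real.exp (‖p i‖ * z)) + z ^ 2 / k ≤
        b i * (Real.log (1 + Real.exp (-(‖p i‖ * z))) + z ^ 2 / k)) :
    ∀ j : Fin n, ∀ x : EuclideanSpace ℝ (Fin d), ‖x‖ ≤ R →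
      (Real.log (1 + Real.exp ⟪p j, x⟫) + ‖x‖ ^ 2 / k) /
        (∑ i : Fin n, (Real.log (1 + Real.exp ⟪p i, x⟫) + ‖x‖ ^ 2 / k)) ≤
      Real.log (1 + Real.exp R) / Real.log 2 * (b j + 1) / ((j : ℕ) + 1) := by
  intro j x hx
  have Fpos : ∀ a : ℝ, 0 < Real.log (1 + Real.exp a) := fun a =>
    Real.log_pos (by linarith [Real.exp_pos a])
  have Fmono : ∀ a c : ℝ, a ≤ c →
      Real.log (1 + Real.exp a) ≤ Real.log (1 + Real.exp c) := fun a c h =>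
    Real.log_le_log (by positivity) (by gcongr)
  have hL2 : Real.log 2 = Real.log (1 + Real.exp 0) := by norm_num
  have hL2pos : 0 < Real.log 2 := Real.log_pos (by norm_num)
  set t := ‖x‖ ^ 2 / k with ht
  have htnn : 0 ≤ t := by positivity
  set L : ℝ := Real.log 2 with hL
  set FR : ℝ := Real.log (1 + Real.exp R) with hFR
  have hLFR : L ≤ FR := by rw [hL2]; exact Fmono 0 R hR.le
  have hFRpos : 0 < FR := Fpos R
  -- b i ≥ 1
  have hb1 : ∀ i : Fin n, 1 ≤ b i := by
    intro i
    have h := hb i R hR le_rfl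
    have h2 := Fmono (-(‖p i‖ * R)) (‖p i‖ * R)
      (by nlinarith [norm_nonneg (p i)])
    have h3 := Fpos (-(‖p i‖ * R))
    have hRk : 0 < R ^ 2 / k := by positivity
    nlinarith
  have hJ : (0:ℝ) < (j : ℕ) + 1 := by positivity
  -- lower bound on each term for i ≤ j
  have key : ∀ i : Fin n, i ≤ j →
      (L + t) / b j ≤ Real.log (1 + Real.exp ⟪p i, x⟫) + t := by
    intro i hij
    have hbij : b i ≤ b j := hbmono hij
    have hbi := hbpos i
    rcases eq_or_ne x 0 with rfl | hx0
    · have : ⟪p i, (0 : EuclideanSpace ℝ (Fin d))⟫ = 0 := inner_zero_right _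
      rw [this]
      have ht0 : t = 0 := by rw [ht]; simp
      rw [ht0, ← hL2, add_zero]
      exact div_le_self hL2pos.le (le_trans (hb1 i) hbij)
    · have hz : 0 < ‖x‖ := norm_pos_iff.2 hx0
      have hbz := hb i ‖x‖ hz hx
      have hcs : -(‖p i‖ * ‖x‖) ≤ ⟪p i, x⟫ := by
        have := abs_real_inner_le_norm (p i) x
        have := neg_abs_le ⟪p i, x⟫
        linarith
      have h1 : Real.log (1 + Real.exp (-(‖p i‖ * ‖x‖))) + t ≤
          Real.log (1 + Real.exp ⟪p i, x⟫) + t := by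
        have := Fmono _ _ hcs; linarith
      have h2 : L + t ≤ Real.log (1 + Real.exp (‖p i‖ * ‖x‖)) + t := by
        have : L ≤ Real.log (1 + Real.exp (‖p i‖ * ‖x‖)) := by
          rw [hL2]; exact Fmono 0 _ (by positivity)
        linarith
      have h3 : (L + t) / b j ≤ (L + t) / b i := by
        apply div_le_div_of_nonneg_left (by positivity) hbi hbij
      have h4 : (L + t) / b i ≤ Real.log (1 + Real.exp (-(‖p i‖ * ‖x‖))) + t := by
        rw [div_le_iff₀ hbi]
        calc L + t ≤ Real.log (1 + Real.exp (‖p i‖ * ‖x‖)) + t := h2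
          _ ≤ b i * (Real.log (1 + Real.exp (-(‖p i‖ * ‖x‖))) + t) := hbz
          _ = (Real.log (1 + Real.exp (-(‖p i‖ * ‖x‖))) + t) * b i := mul_comm _ _
      linarith
  -- sum lower bound
  have sumlb : ((j : ℕ) + 1) * ((L + t) / b j) ≤
      ∑ i : Fin n, (Real.log (1 + Real.exp ⟪p i, x⟫) + t) := by
    have hsub : Finset.Iic j ⊆ Finset.univ := Finset.subset_univ _
    calc ((j : ℕ) + 1 : ℝ) * ((L + t) / b j)
        = ∑ _i ∈ Finset.Iic j, (L + t) / b j := by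
          rw [Finset.sum_const, Fin.card_Iic, nsmul_eq_mul]; push_cast; ring
      _ ≤ ∑ i ∈ Finset.Iic j, (Real.log (1 + Real.exp ⟪p i, x⟫) + t) :=
          Finset.sum_le_sum fun i hi => key i (Finset.mem_Iic.1 hi)
      _ ≤ ∑ i : Fin n, (Real.log (1 + Real.exp ⟪p i, x⟫) + t) :=
          Finset.sum_le_sum_of_subset_of_nonneg hsub fun i _ _ =>
            add_nonneg (Fpos _).le htnn
  -- numerator upper bound
  have numub : Real.log (1 + Real.exp ⟪p j, x⟫) + t ≤ FR + t := by
    have h1 : ⟪p j, x⟫ ≤ R := by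
      have h2 := real_inner_le_norm (p j) x
      have := mul_le_mul (hple j) hx (norm_nonneg x) zero_le_one
      nlinarith
    have := Fmono _ _ h1
    rw [hFR]; linarith
  have hApos : 0 < ((j : ℕ) + 1) * ((L + t) / b j) := by
    have := hbpos j
    positivity
  have hSpos : 0 < ∑ i : Fin n, (Real.log (1 + Real.exp ⟪p i, x⟫) + t) :=
    lt_of_lt_of_le hApos sumlb
  have hNnn : 0 ≤ Real.log (1 + Real.exp ⟪p j, x⟫) + t :=
    add_nonneg (Fpos _).le htnn
  calc (Real.log (1 + Real.exp ⟪p j, x⟫) + t) /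
        (∑ i : Fin n, (Real.log (1 + Real.exp ⟪p i, x⟫) + t))
      ≤ (FR + t) / (((j : ℕ) + 1) * ((L + t) / b j)) := by
        exact div_le_div₀ (by positivity) numub hApos sumlb
    _ ≤ FR / L * (b j + 1) / ((j : ℕ) + 1) := by
        have hbj := hbpos j
        have base : (FR + t) * b j * L ≤ FR * (b j + 1) * (L + t) := by
          nlinarith [mul_le_mul_of_nonneg_left hLFR (mul_nonneg htnn hbj.le)]
        rw [div_le_div_iff₀ hApos hJ]
        have heq : FR / L * (b j + 1) * (((j : ℕ) + 1) * ((L + t) / b j))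
            = FR * (b j + 1) * (((j : ℕ) + 1) * (L + t)) / (L * b j) := by
          field_simp
          try ring
        rw [heq, le_div_iff₀ (by positivity)]
        nlinarith [mul_le_mul_of_nonneg_left base hJ.le]
end
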